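/- If a preference profile satisfies MaxProp, then there exists a woman who is the least preferred woman of every man. -/

import Mathlib

open scoped Classical

noncomputable section

/-- A two-sided matching market with `n` men and `n` women, each with a complete
strict preference order over the other side. `mpref m k` is man `m`'s `k`-th
favourite woman (0 = top), and `wpref w k` is woman `w`'s `k`-th favourite man. -/
structure Profile (n : ℕ) where
  mpref : Fin n → (Fin n ≃ Fin n)
  wpref : Fin n → (Fin n ≃ Fin n)

namespace Profile

variable {n : ℕ}

/-- rank (0 = best) of woman `w` in man `m`'s preference list -/
def mrank (P : Profile n) (m w : Fin n) : ℕ := ((P.mpref m).symm w : ℕ)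

/-- rank (0 = best) of man `m` in woman `w`'s preference list -/
def wrank (P : Profile n) (w m : Fin n) : ℕ := ((P.wpref w).symm m : ℕ)

/-- man `m` strictly prefers woman `w` to woman `w'` -/
def mPrefers (P : Profile n) (m w w' : Fin n) : Prop := P.mrank m w < P.mrank m w'

/-- woman `w` strictly prefers man `m` to man `m'` -/
def wPrefers (P : Profile n) (w m m' : Fin n) : Prop := P.wrank w m < P.wrank w m'

/-- top choice of man `m` -/
def topM (P : Profile n) (m : Fin n) : Fin n := P.mpref m ⟨0, m.pos⟩

/-- top choice of woman `w` -/
def topW (P : Profile n) (w : Fin n) : Fin n := P.wpref w ⟨0, w.pos⟩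

/-- the profile with the roles of men and women exchanged -/
def swap (P : Profile n) : Profile n := ⟨P.wpref, P.mpref⟩

/-- State of the men-proposing deferred acceptance algorithm:
`next m` = number of proposals man `m` has made so far,
`held w` = the man woman `w` currently tentatively holds (if any). -/
structure DAState (n : ℕ) where
  next : Fin n → ℕ
  held : Fin n → Option (Fin n)

def initState (n : ℕ) : DAState n := ⟨fun _ => 0, fun _ => none⟩

/-- the men currently unmatched (held by no woman) -/
def unmatched (s : DAState n) : Finset (Fin n) :=
  Finset.univ.filter fun m => ∀ w : Fin n, s.held w ≠ some m

/-- the woman man `m` proposes to next: his most preferred woman among those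
who have not rejected him yet -/
def target (P : Profile n) (s : DAState n) (m : Fin n) : Fin n :=
  P.mpref m ⟨s.next m % n, Nat.mod_lt _ m.pos⟩

/-- the men proposing to woman `w` in the current round -/
def proposers (P : Profile n) (s : DAState n) (w : Fin n) : Finset (Fin n) :=
  (unmatched s).filter fun m => target P s m = w

/-- one round of the men-proposing deferred acceptance algorithm: every
unmatched man proposes to his favourite woman who has not rejected him yet,
and every woman tentatively holds her favourite among her current partner
and the new proposers, rejecting the rest -/
def step (P : Profile n) (s : DAState n) : DAState n where
  next := fun m => if m ∈ unmatched s then s.next m + 1 else s.next m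
  held := fun w => ((proposers P s w ∪ (s.held w).toFinset).toList).argmin (P.wrank w)

/-- the state after `k` rounds of men-proposing deferred acceptance -/
def stateAt (P : Profile n) (k : ℕ) : DAState n := (step P)^[k] (initState n)

/-- the final state of men-proposing deferred acceptance
(`n * n + 1` iterations is always enough to reach the fixed point) -/
def finalState (P : Profile n) : DAState n := stateAt P (n * n + 1)

/-- total number of proposals made during the men-proposing DA -/
def totalProposals (P : Profile n) : ℕ := ∑ m : Fin n, (finalState P).next m

/-- number of rounds of the men-proposing DA (rounds in which some proposal is made) -/
def rounds (P : Profile n) : ℕ :=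
  ((Finset.range (n * n + 1)).filter fun k => (unmatched (stateAt P k)).Nonempty).card

/-- total number of proposals received by woman `w` during the men-proposing DA -/
def proposalsTo (P : Profile n) (w : Fin n) : ℕ :=
  ∑ k ∈ Finset.range (n * n + 1), (proposers P (stateAt P k) w).card

/-- man `m` proposes to woman `w` at some point during the men-proposing DA -/
def proposedTo (P : Profile n) (m w : Fin n) : Prop :=
  ∃ k < n * n + 1, m ∈ proposers P (stateAt P k) w

/-- the men-proposing DA makes the maximum possible number `n² - n + 1` of proposals -/
def MaxProp (P : Profile n) : Prop := P.totalProposals = n * n + 1 - n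

/-- the men-proposing DA takes the maximum possible number `n² - 2n + 2` of rounds -/
def MaxRou (P : Profile n) : Prop := P.rounds = n * n + 2 - 2 * n

/-- a matching (a bijection man ↦ woman) is stable iff no man-woman pair mutually
prefer each other to their assigned partners -/
def Stable (P : Profile n) (μ : Fin n ≃ Fin n) : Prop :=
  ¬ ∃ (m w : Fin n), P.mPrefers m w (μ m) ∧ P.wPrefers w m (μ.symm w)

/-- the profile admits a unique stable matching -/
def USM (P : Profile n) : Prop := ∃! μ : Fin n ≃ Fin n, P.Stable μ

/-- the sequential preference condition of Eeckhout (2000) -/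
def SPC (P : Profile n) : Prop :=
  ∃ σ τ : Equiv.Perm (Fin n), ∀ i j : Fin n, i < j →
    P.mPrefers (σ i) (τ i) (τ j) ∧ P.wPrefers (τ i) (σ i) (σ j)

/-- the no crossing condition of Clark (2006) -/
def NCC (P : Profile n) : Prop :=
  ∃ σ τ : Equiv.Perm (Fin n), ∀ i j k l : Fin n, i < j → k < l →
    (P.mPrefers (σ i) (τ l) (τ k) → P.mPrefers (σ j) (τ l) (τ k)) ∧
    (P.wPrefers (τ k) (σ j) (σ i) → P.wPrefers (τ l) (σ j) (σ i))

end Profile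

/-!
Every man proposes to at most `n` women, so `n² - n + 1` proposals force some man `m` to
propose to all `n` of them. Consider the round in which `m` proposes to his last choice `w`.
Every other woman has already received a proposal from `m`, hence holds a man, while `w` holds
nobody (otherwise all `n` men would be held). So `m` is the only free man, the algorithm stops
after this round, and no man has proposed to `w` yet: each man `m'` has made at most
`rank_{m'}(w) ≤ n - 1` proposals. Since the `n² - n` earlier proposals are bounded by
`∑ rank_{m'}(w) ≤ n(n - 1)`, every man ranks `w` last.
-/

theorem exists_lt_eq_and_succ_eq {f : ℕ → ℕ} (hf : ∀ k, f (k + 1) ≤ f k + 1) {c T : ℕ}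
    (h0 : f 0 ≤ c) (hT : c < f T) : ∃ k < T, f k = c ∧ f (k + 1) = c + 1 := by
  induction T with
  | zero => omega
  | succ T ih =>
    by_cases hc : c < f T
    · obtain ⟨k, hk, hfk⟩ := ih hc
      exact ⟨k, by omega, hfk⟩
    · have := hf T
      exact ⟨T, by omega, by omega, by omega⟩

namespace Profile

variable {n : ℕ}

theorem mrank_lt (P : Profile n) (m w : Fin n) : P.mrank m w < n := ((P.mpref m).symm w).isLt

theorem mrank_injective {P : Profile n} {m w w' : Fin n} (h : P.mrank m w = P.mrank m w') :
    w = w' :=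
  (P.mpref m).symm.injective (Fin.ext h)

theorem mrank_target {P : Profile n} {s : DAState n} {m : Fin n} (h : s.next m < n) :
    P.mrank m (target P s m) = s.next m := by
  simp [mrank, target, Nat.mod_eq_of_lt h]

@[simp]
theorem mem_unmatched {s : DAState n} {m : Fin n} :
    m ∈ unmatched s ↔ ∀ w, s.held w ≠ some m := by
  simp [unmatched]

@[simp]
theorem mem_proposers {P : Profile n} {s : DAState n} {w m : Fin n} :
    m ∈ proposers P s w ↔ m ∈ unmatched s ∧ target P s m = w := by
  simp [proposers]

theorem step_next (P : Profile n) (s : DAState n) (m : Fin n) :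
    (step P s).next m = if m ∈ unmatched s then s.next m + 1 else s.next m := rfl

theorem isSome_held_step {P : Profile n} {s : DAState n} {w : Fin n}
    (h : (proposers P s w ∪ (s.held w).toFinset).Nonempty) : ((step P s).held w).isSome := by
  simpa [step, Option.isSome_iff_ne_none, List.argmin_eq_none] using h.ne_empty

theorem isSome_held_step_of_isSome {P : Profile n} {s : DAState n} {w : Fin n}
    (h : (s.held w).isSome) : ((step P s).held w).isSome := by
  obtain ⟨m, hm⟩ := Option.isSome_iff_exists.mp h
  exact isSome_held_step ⟨m, Finset.mem_union_right _ (by simp [hm])⟩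

theorem mem_proposers_or_held_of_held_step {P : Profile n} {s : DAState n} {w m : Fin n}
    (h : (step P s).held w = some m) : m ∈ proposers P s w ∨ s.held w = some m := by
  simpa using List.argmin_mem h

def HeldInjective (s : DAState n) : Prop :=
  ∀ ⦃w w' m : Fin n⦄, s.held w = some m → s.held w' = some m → w = w'

theorem HeldInjective.step {P : Profile n} {s : DAState n} (hs : HeldInjective s) :
    HeldInjective (step P s) := by
  intro w w' m h h'
  rcases mem_proposers_or_held_of_held_step h with hp | hp <;>
    rcases mem_proposers_or_held_of_held_step h' with hp' | hp'
  · exact (mem_proposers.1 hp).2.symm.trans (mem_proposers.1 hp').2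
  · exact absurd hp' (mem_unmatched.1 (mem_proposers.1 hp).1 w')
  · exact absurd hp (mem_unmatched.1 (mem_proposers.1 hp').1 w)
  · exact hs hp hp'

theorem HeldInjective.card_unmatched {s : DAState n} (hs : HeldInjective s) :
    (unmatched s).card = (Finset.univ.filter fun w => s.held w = none).card := by
  have hmatched :
      (Finset.univ.filter fun w => ¬ s.held w = none).card = (unmatched s)ᶜ.card := by
    refine Finset.card_bij
      (fun w hw => (s.held w).get (Option.isSome_iff_ne_none.2 (by simpa using hw))) ?_ ?_ ?_
    · intro w _
      simp
    · intro w _ w' _ h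
      exact hs (Option.some_get _).symm ((Option.some_get _).symm.trans (congrArg some h.symm))
    · intro m hm
      obtain ⟨w, hw⟩ : ∃ w, s.held w = some m := by simpa using hm
      exact ⟨w, by simp [hw], by simp [hw]⟩
  have hcompl := Finset.card_compl_add_card (unmatched s)
  have hsplit := Finset.card_filter_add_card_filter_not (s := Finset.univ)
    (fun w => s.held w = none)
  rw [Finset.card_univ] at hsplit
  omega

theorem HeldInjective.unmatched_eq_empty {s : DAState n} (hs : HeldInjective s)
    (h : ∀ w, (s.held w).isSome) : unmatched s = ∅ := by
  rw [← Finset.card_eq_zero, hs.card_unmatched, Finset.card_eq_zero, Finset.filter_eq_empty_iff]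
  exact fun w _ => Option.isSome_iff_ne_none.1 (h w)

/-- `P.mrank m w < s.next m` says that `m` has proposed to `w`; such a woman keeps holding someone. -/
structure Invariant (P : Profile n) (s : DAState n) : Prop where
  heldInjective : HeldInjective s
  isSome_held_of_mrank_lt : ∀ m w, P.mrank m w < s.next m → (s.held w).isSome

theorem Invariant.next_lt_of_mem_unmatched {P : Profile n} {s : DAState n} (hs : Invariant P s)
    {m : Fin n} (hm : m ∈ unmatched s) : s.next m < n := by
  by_contra! hle
  have hall : ∀ w, (s.held w).isSome := fun w =>
    hs.isSome_held_of_mrank_lt m w ((P.mrank_lt m w).trans_le hle)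
  rw [hs.heldInjective.unmatched_eq_empty hall] at hm
  exact Finset.notMem_empty m hm

theorem Invariant.next_le_mrank_of_held_eq_none {P : Profile n} {s : DAState n}
    (hs : Invariant P s) {w : Fin n} (hw : s.held w = none) (m : Fin n) :
    s.next m ≤ P.mrank m w := by
  by_contra! hlt
  simpa [hw] using hs.isSome_held_of_mrank_lt m w hlt

theorem Invariant.step {P : Profile n} {s : DAState n} (hs : Invariant P s) :
    Invariant P (step P s) where
  heldInjective := hs.heldInjective.step
  isSome_held_of_mrank_lt m w h := by
    rw [step_next] at h
    split_ifs at h with hm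
    · rcases Nat.lt_succ_iff_lt_or_eq.1 h with h | h
      · exact isSome_held_step_of_isSome (hs.isSome_held_of_mrank_lt m w h)
      · have htarget : target P s m = w :=
          mrank_injective ((mrank_target (hs.next_lt_of_mem_unmatched hm)).trans h.symm)
        exact isSome_held_step ⟨m, Finset.mem_union_left _ (mem_proposers.2 ⟨hm, htarget⟩)⟩
    · exact isSome_held_step_of_isSome (hs.isSome_held_of_mrank_lt m w h)

theorem stateAt_succ (P : Profile n) (k : ℕ) : stateAt P (k + 1) = step P (stateAt P k) :=
  Function.iterate_succ_apply' _ _ _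

theorem invariant_stateAt (P : Profile n) (k : ℕ) : Invariant P (stateAt P k) := by
  induction k with
  | zero => exact ⟨fun w _ m h => by simp [stateAt, initState] at h, fun m w h => by
      simp [stateAt, initState] at h⟩
  | succ k ih => rw [stateAt_succ]; exact ih.step

theorem step_eq_self_of_unmatched_eq_empty {P : Profile n} {s : DAState n}
    (h : unmatched s = ∅) : step P s = s := by
  have hp : ∀ w, proposers P s w = ∅ := fun w => by simp [proposers, h]
  cases s with
  | mk next held =>
    simp only [step, h, hp, Finset.notMem_empty, if_false, Finset.empty_union]
    congr
    funext w
    cases held w <;> simp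

theorem stateAt_eq_of_unmatched_eq_empty {P : Profile n} {k T : ℕ} (hkT : k ≤ T)
    (h : unmatched (stateAt P k) = ∅) : stateAt P T = stateAt P k := by
  induction T, hkT using Nat.le_induction with
  | base => rfl
  | succ T _ ih => rw [stateAt_succ, ih, step_eq_self_of_unmatched_eq_empty h]

theorem exists_lt_mem_unmatched_and_next_add_one_eq (P : Profile n) {m : Fin n} {T : ℕ}
    (hT : n - 1 < (stateAt P T).next m) :
    ∃ k < T, m ∈ unmatched (stateAt P k) ∧ (stateAt P k).next m + 1 = n := by
  obtain ⟨k, hk, hkm, hkm'⟩ := exists_lt_eq_and_succ_eq (f := fun k => (stateAt P k).next m)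
    (fun k => by rw [stateAt_succ, step_next]; split_ifs <;> omega) (Nat.zero_le _) hT
  simp only [stateAt_succ, step_next] at hkm hkm'
  have hum : m ∈ unmatched (stateAt P k) := by
    by_contra hum
    rw [if_neg hum] at hkm'
    omega
  exact ⟨k, hk, hum, by have := m.pos; omega⟩

theorem mPrefers_of_le_sum_mrank {P : Profile n} {w : Fin n}
    (h : n * (n - 1) ≤ ∑ m, P.mrank m w) (m w' : Fin n) (hw : w' ≠ w) : P.mPrefers m w' w := by
  have hle : ∀ m ∈ Finset.univ, P.mrank m w ≤ n - 1 :=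
    fun m _ => Nat.le_sub_one_of_lt (P.mrank_lt m w)
  have hlast : P.mrank m w = n - 1 := by
    refine (Finset.sum_eq_sum_iff_of_le hle).1 ?_ m (Finset.mem_univ m)
    exact le_antisymm (Finset.sum_le_sum hle) (by simpa using h)
  have hne : P.mrank m w' ≠ P.mrank m w := fun h => hw (mrank_injective h)
  have := P.mrank_lt m w'
  unfold mPrefers
  omega

section LastProposal

/- `s` is the state just before man `m` makes his `n`-th and last proposal, to `target P s m`. -/

variable {P : Profile n} {s : DAState n} {m : Fin n}

theorem isSome_held_of_ne_target (hs : Invariant P s) (hlast : s.next m + 1 = n) {w : Fin n}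
    (hw : w ≠ target P s m) : (s.held w).isSome := by
  have hne : P.mrank m w ≠ s.next m := fun h =>
    hw (mrank_injective (h.trans (mrank_target (by omega)).symm))
  have := P.mrank_lt m w
  exact hs.isSome_held_of_mrank_lt m w (by omega)

theorem held_target_eq_none (hs : Invariant P s) (hm : m ∈ unmatched s)
    (hlast : s.next m + 1 = n) : s.held (target P s m) = none := by
  by_contra! h
  have hall : ∀ w, (s.held w).isSome := fun w => by
    by_cases hw : w = target P s m
    · exact hw ▸ Option.isSome_iff_ne_none.2 h
    · exact isSome_held_of_ne_target hs hlast hw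
  rw [hs.heldInjective.unmatched_eq_empty hall] at hm
  exact Finset.notMem_empty m hm

theorem unmatched_eq_singleton (hs : Invariant P s) (hm : m ∈ unmatched s)
    (hlast : s.next m + 1 = n) : unmatched s = {m} := by
  have hunheld : (Finset.univ.filter fun w => s.held w = none) = {target P s m} := by
    ext w
    by_cases hw : w = target P s m
    · simp [hw, held_target_eq_none hs hm hlast]
    · simp [hw, Option.isSome_iff_ne_none.1 (isSome_held_of_ne_target hs hlast hw)]
  have hcard : (unmatched s).card = 1 := by
    rw [hs.heldInjective.card_unmatched, hunheld, Finset.card_singleton]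
  exact Finset.eq_singleton_iff_unique_mem.2
    ⟨hm, fun m' hm' => Finset.card_le_one.1 hcard.le m' hm' m hm⟩

theorem unmatched_step_eq_empty (hs : Invariant P s) (hm : m ∈ unmatched s)
    (hlast : s.next m + 1 = n) : unmatched (step P s) = ∅ := by
  refine hs.step.heldInjective.unmatched_eq_empty fun w => ?_
  by_cases hw : w = target P s m
  · exact isSome_held_step ⟨m, Finset.mem_union_left _ (mem_proposers.2 ⟨hm, hw.symm⟩)⟩
  · exact isSome_held_step_of_isSome (isSome_held_of_ne_target hs hlast hw)

theorem sum_next_step_le (hs : Invariant P s) (hm : m ∈ unmatched s)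
    (hlast : s.next m + 1 = n) :
    ∑ m', (step P s).next m' ≤ ∑ m', P.mrank m' (target P s m) + 1 := by
  have hsum : ∑ m', (step P s).next m' = ∑ m', s.next m' + 1 := by
    simp [step_next, unmatched_eq_singleton hs hm hlast, Finset.sum_ite, Finset.filter_eq',
      Finset.filter_ne', Finset.add_sum_erase, add_right_comm]
  rw [hsum]
  gcongr with m'
  exact hs.next_le_mrank_of_held_eq_none (held_target_eq_none hs hm hlast) m'

end LastProposal

end Profile

/-- Under MaxProp, there is a woman who is the least preferred woman of every man. -/
theorem maxProp_exists_common_last (n : ℕ) (P : Profile n) (h : P.MaxProp) :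
    ∃ w : Fin n, ∀ m w' : Fin n, w' ≠ w → P.mPrefers m w' w := by
  unfold Profile.MaxProp Profile.totalProposals Profile.finalState at h
  have hsq : n * (n - 1) = n * n - n := Nat.mul_sub_one n n
  have hsq' : n ≤ n * n := Nat.le_mul_self n
  obtain ⟨m, -, hm⟩ : ∃ m ∈ Finset.univ, n - 1 < (P.stateAt (n * n + 1)).next m := by
    refine Finset.exists_lt_of_sum_lt ?_
    simp only [Finset.sum_const, Finset.card_univ, Fintype.card_fin, smul_eq_mul, h]
    omega
  obtain ⟨k, hk, hum, hlast⟩ := P.exists_lt_mem_unmatched_and_next_add_one_eq hm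
  have hs := P.invariant_stateAt k
  have hfinal : P.stateAt (n * n + 1) = Profile.step P (P.stateAt k) := by
    rw [← Profile.stateAt_succ]
    refine Profile.stateAt_eq_of_unmatched_eq_empty hk ?_
    rw [Profile.stateAt_succ]
    exact Profile.unmatched_step_eq_empty hs hum hlast
  refine ⟨Profile.target P (P.stateAt k) m, Profile.mPrefers_of_le_sum_mrank ?_⟩
  have hsum := Profile.sum_next_step_le hs hum hlast
  rw [← hfinal, h] at hsum
  omega
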